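/- Let X be a path-connected pointed space with basepoint x₀. Then the fibered based-loop topological complexity satisfies TC_{LP}^{(Id_X, const_{x₀}, X)}(X) = cat(X). -/

import Mathlib

open unitInterval Set

/-- A `k`-fold open cover of `A ⊆ X × X` by sets admitting continuous choices of paths
from the first to the second coordinate. -/
def SecCover {X : Type*} [TopologicalSpace X] (A : Set (X × X)) (k : ℕ) : Prop :=
  ∃ U : Fin k → Set A, (∀ i, IsOpen (U i)) ∧ (⋃ i, U i) = Set.univ ∧
    ∀ i, ∃ s : C(U i, C(unitInterval, X)),
      ∀ p : U i, s p 0 = ((p : A) : X × X).1 ∧ s p 1 = ((p : A) : X × X).2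

/-- Relative topological complexity `TC_X(A)`. -/
noncomputable def relTC {X : Type*} [TopologicalSpace X] (A : Set (X × X)) : ℕ∞ :=
  sInf {n : ℕ∞ | ∃ k : ℕ, n = k ∧ SecCover A k}

/-- Lusternik–Schnirelmann category. -/
noncomputable def lsCat (X : Type*) [TopologicalSpace X] : ℕ∞ :=
  sInf {n : ℕ∞ | ∃ k : ℕ, n = k ∧ ∃ U : Fin k → Set X,
    (∀ i, IsOpen (U i)) ∧ (⋃ i, U i) = Set.univ ∧
    ∀ i, ∃ x₀ : X, ContinuousMap.Homotopic
      ⟨Subtype.val, continuous_subtype_val⟩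
      (ContinuousMap.const (U i) x₀)}

/-- Fiber product of `f` and `g`. -/
def fiberProd {X Z : Type*} (f g : X → Z) : Set (X × X) := {p | f p.1 = g p.2}

/-- A `k`-fold open cover of `A` by sets admitting continuous based-loop sections:
loops based at `x₀` passing through the second coordinate at time `1/2`. -/
def BasedLoopSecCover {X : Type*} [TopologicalSpace X] (x₀ : X) (A : Set (X × X)) (k : ℕ) : Prop :=
  ∃ U : Fin k → Set A, (∀ i, IsOpen (U i)) ∧ (⋃ i, U i) = Set.univ ∧
    ∀ i, ∃ s : C(U i, C(unitInterval, X)),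
      ∀ p : U i, s p 0 = x₀ ∧ s p 1 = x₀ ∧
        s p ⟨1/2, by norm_num, by norm_num⟩ = ((p : A) : X × X).2

/-- The fibered based-loop topological complexity. -/
noncomputable def basedLoopTC {X : Type*} [TopologicalSpace X] (x₀ : X) (A : Set (X × X)) : ℕ∞ :=
  sInf {n : ℕ∞ | ∃ k : ℕ, n = k ∧ BasedLoopSecCover x₀ A k}

/-!
Identify `{x₀} × X` with `X`. The second half of a loop at `x₀` passing through `y` at time `1/2`
is a path from `y` to `x₀`; if these loops depend continuously on `y ∈ U`, the second halves
contract `U` to `x₀`. Conversely, a contraction of `U` to some `x₁` followed by a fixed path from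
`x₁` to `x₀` gives paths `γ_y` from `y` to `x₀` depending continuously on `y`, and `γ_y⁻¹ ⬝ γ_y` is
a based loop through `y` at time `1/2`. So both invariants are minimal sizes of the same covers.
-/

section

variable {X Y Z : Type*} [TopologicalSpace X] [TopologicalSpace Y] [TopologicalSpace Z]

def HasOpenCover (Y : Type*) [TopologicalSpace Y] (k : ℕ) (Q : Set Y → Prop) : Prop :=
  ∃ U : Fin k → Set Y, (∀ i, IsOpen (U i)) ∧ (⋃ i, U i) = univ ∧ ∀ i, Q (U i)

theorem HasOpenCover.preimage {k : ℕ} {Q : Set Y → Prop} {Q' : Set Z → Prop}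
    (h : HasOpenCover Y k Q) {φ : Z → Y} (hφ : Continuous φ)
    (hQ : ∀ U, Q U → Q' (φ ⁻¹' U)) : HasOpenCover Z k Q' := by
  obtain ⟨U, hU, hcov, hQU⟩ := h
  refine ⟨fun i => φ ⁻¹' U i, fun i => (hU i).preimage hφ, ?_, fun i => hQ _ (hQU i)⟩
  rw [← preimage_iUnion, hcov, preimage_univ]

def HasBasedLoopSection (x₀ : X) (f : Y → X) : Prop :=
  ∃ s : C(Y, C(I, X)), ∀ y, s y 0 = x₀ ∧ s y 1 = x₀ ∧ s y ⟨1/2, by norm_num, by norm_num⟩ = f y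

theorem HasBasedLoopSection.comp {x₀ : X} {f : Y → X} (h : HasBasedLoopSection x₀ f)
    (g : C(Z, Y)) : HasBasedLoopSection x₀ (f ∘ g) :=
  let ⟨s, hs⟩ := h
  ⟨s.comp g, fun z => hs (g z)⟩

theorem unitInterval.pathConnectedSpace : PathConnectedSpace I :=
  isPathConnected_iff_pathConnectedSpace.mp
    ((convex_Icc (0 : ℝ) 1).isPathConnected (nonempty_Icc.mpr zero_le_one))

theorem ContinuousMap.Homotopic.of_eval_path {T : Type*} [TopologicalSpace T]
    [LocallyCompactSpace T] {f g : C(Y, X)} (s : C(Y, C(T, X))) {a b : T} (γ : Path a b)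
    (ha : ∀ y, s y a = f y) (hb : ∀ y, s y b = g y) : f.Homotopic g :=
  ⟨{ toFun := fun p => s p.2 (γ p.1)
     continuous_toFun := by fun_prop
     map_zero_left := by simp [ha]
     map_one_left := by simp [hb] }⟩

theorem HasBasedLoopSection.nullhomotopic {x₀ : X} {f : C(Y, X)}
    (h : HasBasedLoopSection x₀ f) : f.Nullhomotopic := by
  obtain ⟨s, hs⟩ := h
  have := unitInterval.pathConnectedSpace
  exact ⟨x₀, .of_eval_path s (PathConnectedSpace.somePath _ 1) (fun y => (hs y).2.2)
    (fun y => (hs y).2.1)⟩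

theorem Path.symm_trans_self_apply_half {a b : X} (γ : Path a b) :
    (γ.symm.trans γ) ⟨1/2, by norm_num, by norm_num⟩ = a := by
  rw [Path.trans_apply, dif_pos (by norm_num)]
  convert γ.symm.target using 2
  ext; norm_num

theorem hasBasedLoopSection_of_pathFamily {x₀ : X} {f : Y → X} (γ : ∀ y, Path (f y) x₀)
    (hγ : Continuous ↿γ) : HasBasedLoopSection x₀ f := by
  have hloop : Continuous ↿fun y => (γ y).symm.trans (γ y) :=
    Path.trans_continuous_family _ (Path.symm_continuous_family _ hγ) _ hγ
  exact ⟨ContinuousMap.curry ⟨_, hloop⟩, fun y =>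
    ⟨((γ y).symm.trans (γ y)).source, ((γ y).symm.trans (γ y)).target,
      (γ y).symm_trans_self_apply_half⟩⟩

theorem ContinuousMap.Homotopy.continuous_evalAt_trans {x₀ x₁ : X} {f : C(Y, X)}
    (H : f.Homotopy (.const Y x₁)) (q : Path x₁ x₀) :
    Continuous ↿fun y => (H.evalAt y).trans q :=
  Path.trans_continuous_family _ (by exact H.continuous.comp continuous_swap) (fun _ => q)
    (by exact q.continuous.comp continuous_snd)

theorem ContinuousMap.Nullhomotopic.hasBasedLoopSection [PathConnectedSpace X] {f : C(Y, X)}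
    (hf : f.Nullhomotopic) (x₀ : X) : HasBasedLoopSection x₀ f := by
  obtain ⟨x₁, ⟨H⟩⟩ := hf
  exact hasBasedLoopSection_of_pathFamily _
    (H.continuous_evalAt_trans (PathConnectedSpace.somePath x₁ x₀))

theorem basedLoopSecCover_iff_hasOpenCover (x₀ : X) (A : Set (X × X)) (k : ℕ) :
    BasedLoopSecCover x₀ A k ↔
      HasOpenCover A k fun W => HasBasedLoopSection x₀ fun p : W => ((p : A) : X × X).2 :=
  Iff.rfl

theorem basedLoopSecCover_fiberProd_id_const_iff [PathConnectedSpace X] (x₀ : X) (k : ℕ) :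
    BasedLoopSecCover x₀ (fiberProd (id : X → X) (fun _ : X => x₀)) k ↔
      HasOpenCover X k fun U =>
        (⟨Subtype.val, continuous_subtype_val⟩ : C(U, X)).Nullhomotopic := by
  let π : C(fiberProd (id : X → X) (fun _ : X => x₀), X) := ⟨fun p => (p : X × X).2, by fun_prop⟩
  let ι : C(X, fiberProd (id : X → X) (fun _ : X => x₀)) := ⟨fun y => ⟨(x₀, y), rfl⟩, by fun_prop⟩
  rw [basedLoopSecCover_iff_hasOpenCover]
  -- `π ∘ ι = id` holds definitionally, so the restricted maps below match the inclusions by `rfl`.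
  refine ⟨fun h => h.preimage ι.continuous fun W hW => ?_,
    fun h => h.preimage π.continuous fun V hV => ?_⟩
  · exact (hW.comp (ι.restrictPreimage W)).nullhomotopic
  · exact (hV.comp_left (π.restrictPreimage V)).hasBasedLoopSection x₀

end

theorem basedLoopTC_id_const_eq_cat {X : Type*} [TopologicalSpace X] [PathConnectedSpace X]
    (x₀ : X) :
    basedLoopTC x₀ (fiberProd (id : X → X) (fun _ : X => x₀)) = lsCat X := by
  unfold basedLoopTC lsCat
  simp_rw [basedLoopSecCover_fiberProd_id_const_iff]
  rfl
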